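/- Each component of the two-dimensional Stokeslet velocity field is harmonic in the direction of Δ applied twice (biharmonic): for fixed y ∈ ℝ² and σ ∈ ℝ², the field u(x) = (-log‖x−y‖) σ + (((x−y)·σ)/‖x−y‖²)(x−y) satisfies Δ(Δu) = 0 componentwise for x ≠ y. -/

import Mathlib

noncomputable def pd1 (f : ℝ × ℝ → ℝ) (x : ℝ × ℝ) : ℝ :=
  deriv (fun t => f (t, x.2)) x.1

noncomputable def pd2 (f : ℝ × ℝ → ℝ) (x : ℝ × ℝ) : ℝ :=
  deriv (fun t => f (x.1, t)) x.2

noncomputable def lap (f : ℝ × ℝ → ℝ) : ℝ × ℝ → ℝ :=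
  fun x => pd1 (pd1 f) x + pd2 (pd2 f) x

noncomputable def divg (u : ℝ × ℝ → ℝ × ℝ) (x : ℝ × ℝ) : ℝ :=
  pd1 (fun z => (u z).1) x + pd2 (fun z => (u z).2) x

/-- Euclidean dot product on `ℝ × ℝ`. -/
def dot (a b : ℝ × ℝ) : ℝ := a.1 * b.1 + a.2 * b.2

/-- Euclidean norm on `ℝ × ℝ`. -/
noncomputable def nrm (a : ℝ × ℝ) : ℝ := Real.sqrt (a.1 ^ 2 + a.2 ^ 2)

/-- Squared Euclidean norm on `ℝ × ℝ`. -/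
def nrmsq (a : ℝ × ℝ) : ℝ := a.1 ^ 2 + a.2 ^ 2

/-- The 2D Stokeslet velocity field with singularity at `y` and strength `σ`. -/
noncomputable def stokeslet (y σ : ℝ × ℝ) (x : ℝ × ℝ) : ℝ × ℝ :=
  (-Real.log (nrm (x - y))) • σ + (dot (x - y) σ / nrmsq (x - y)) • (x - y)

/-- The 2D rotlet velocity field with singularity at `c` and strength `μ`. -/
noncomputable def rotlet (c : ℝ × ℝ) (μ : ℝ) (x : ℝ × ℝ) : ℝ × ℝ :=
  (μ / nrmsq (x - c)) • ((x - c).2, -(x - c).1)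

/-!
Translation commutes with `lap`, and `pd2` is `pd1` read through `Prod.swap`, so it suffices to
compute second derivatives in the first variable of the components of the Stokeslet at the origin.
Off the origin, with `ρ = nrmsq z`, the `e`-component has Laplacian
`2 (e ⬝ σ) / ρ - 4 (e ⬝ z) (σ ⬝ z) / ρ ^ 2` (the logarithm is harmonic), and the Laplacian of
that vanishes identically.
-/

open Set Filter

theorem Prod.swap_ne_zero {α β : Type*} [Zero α] [Zero β] {q : α × β} (hq : q ≠ 0) :
    q.swap ≠ 0 :=
  fun h => hq (by simpa using congrArg Prod.swap h)

section PartialDerivatives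

variable {f g f' f'' : ℝ × ℝ → ℝ} {U : Set (ℝ × ℝ)}

theorem lap_apply_eq_pd1_add_pd1_comp_swap (f : ℝ × ℝ → ℝ) (p : ℝ × ℝ) :
    lap f p = pd1 (pd1 f) p + pd1 (pd1 (f ∘ Prod.swap)) p.swap :=
  rfl

theorem Set.EqOn.pd1 (hU : IsOpen U) (h : EqOn f g U) : EqOn (pd1 f) (pd1 g) U := by
  intro p hp
  have hline : ContinuousAt (fun t : ℝ => (t, p.2)) p.1 := by fun_prop
  exact EventuallyEq.deriv_eq <|
    eventually_of_mem (hline.preimage_mem_nhds (hU.mem_nhds hp)) fun _ ht => h ht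

theorem Set.EqOn.lap (hU : IsOpen U) (h : EqOn f g U) : EqOn (lap f) (lap g) U := by
  have hswap : EqOn (f ∘ Prod.swap) (g ∘ Prod.swap) (Prod.swap ⁻¹' U) := fun _ hq => h hq
  have hU' : IsOpen (Prod.swap ⁻¹' U) := hU.preimage continuous_swap
  intro p hp
  rw [lap_apply_eq_pd1_add_pd1_comp_swap, lap_apply_eq_pd1_add_pd1_comp_swap,
    (h.pd1 hU).pd1 hU hp, (hswap.pd1 hU').pd1 hU' (show p.swap.swap ∈ U from hp)]

theorem pd1_eqOn_of_hasDerivAt (h : ∀ q ∈ U, HasDerivAt (fun t => f (t, q.2)) (f' q) q.1) :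
    EqOn (pd1 f) f' U :=
  fun q hq => (h q hq).deriv

theorem pd1_pd1_eqOn_of_hasDerivAt (hU : IsOpen U)
    (h : ∀ q ∈ U, HasDerivAt (fun t => f (t, q.2)) (f' q) q.1)
    (h' : ∀ q ∈ U, HasDerivAt (fun t => f' (t, q.2)) (f'' q) q.1) :
    EqOn (pd1 (pd1 f)) f'' U :=
  ((pd1_eqOn_of_hasDerivAt h).pd1 hU).trans (pd1_eqOn_of_hasDerivAt h')

theorem pd1_comp_sub_const (f : ℝ × ℝ → ℝ) (y : ℝ × ℝ) :
    pd1 (f ∘ (· - y)) = pd1 f ∘ (· - y) :=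
  funext fun z => deriv_comp_sub_const (f := fun t => f (t, z.2 - y.2)) ..

theorem lap_comp_sub_const (f : ℝ × ℝ → ℝ) (y : ℝ × ℝ) :
    lap (f ∘ (· - y)) = lap f ∘ (· - y) := by
  have hswap : (f ∘ (· - y)) ∘ Prod.swap = (f ∘ Prod.swap) ∘ (· - y.swap) := rfl
  funext z
  rw [Function.comp_apply, lap_apply_eq_pd1_add_pd1_comp_swap,
    lap_apply_eq_pd1_add_pd1_comp_swap, hswap,
    pd1_comp_sub_const, pd1_comp_sub_const, pd1_comp_sub_const, pd1_comp_sub_const]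
  rfl

end PartialDerivatives

section ClosedForms

variable (c : ℝ) (e s : ℝ × ℝ)

theorem nrmsq_ne_zero {q : ℝ × ℝ} (hq : q ≠ 0) : nrmsq q ≠ 0 := by
  have : q.1 ≠ 0 ∨ q.2 ≠ 0 := by
    by_contra! h
    exact hq (Prod.ext h.1 h.2)
  unfold nrmsq
  rcases this with h | h <;> positivity

theorem nrmsq_swap (z : ℝ × ℝ) : nrmsq z.swap = nrmsq z := add_comm _ _

theorem dot_swap_right (z : ℝ × ℝ) : dot e z.swap = dot e.swap z := add_comm _ _

theorem hasDerivAt_dot_mk_fst (q : ℝ × ℝ) : HasDerivAt (fun t => dot e (t, q.2)) e.1 q.1 :=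
  (((hasDerivAt_id' q.1).const_mul e.1).add_const (e.2 * q.2)).congr_deriv (mul_one _)

theorem hasDerivAt_nrmsq_mk_fst (q : ℝ × ℝ) :
    HasDerivAt (fun t => nrmsq (t, q.2)) (2 * q.1) q.1 :=
  ((hasDerivAt_pow 2 q.1).add_const (q.2 ^ 2)).congr_deriv (by ring)

/-- `c` is kept free: `Real.log ∘ nrmsq` is harmonic, so it drops out of the Laplacian. -/
noncomputable def stokesletComponent (z : ℝ × ℝ) : ℝ :=
  c * Real.log (nrmsq z) + dot e z * dot s z / nrmsq z

noncomputable def stokesletComponentDx (z : ℝ × ℝ) : ℝ :=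
  2 * c * z.1 / nrmsq z + (e.1 * dot s z + s.1 * dot e z) / nrmsq z
    - 2 * z.1 * dot e z * dot s z / nrmsq z ^ 2

noncomputable def stokesletComponentDxx (z : ℝ × ℝ) : ℝ :=
  2 * c / nrmsq z - 4 * c * z.1 ^ 2 / nrmsq z ^ 2 + 2 * e.1 * s.1 / nrmsq z
    - 4 * z.1 * (e.1 * dot s z + s.1 * dot e z) / nrmsq z ^ 2
    - 2 * dot e z * dot s z / nrmsq z ^ 2 + 8 * z.1 ^ 2 * dot e z * dot s z / nrmsq z ^ 3

noncomputable def lapStokesletComponent (z : ℝ × ℝ) : ℝ :=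
  2 * dot e s / nrmsq z - 4 * dot e z * dot s z / nrmsq z ^ 2

noncomputable def lapStokesletComponentDx (z : ℝ × ℝ) : ℝ :=
  -4 * dot e s * z.1 / nrmsq z ^ 2 - 4 * (e.1 * dot s z + s.1 * dot e z) / nrmsq z ^ 2
    + 16 * z.1 * dot e z * dot s z / nrmsq z ^ 3

noncomputable def lapStokesletComponentDxx (z : ℝ × ℝ) : ℝ :=
  -4 * dot e s / nrmsq z ^ 2 + 16 * dot e s * z.1 ^ 2 / nrmsq z ^ 3
    - 8 * e.1 * s.1 / nrmsq z ^ 2 + 32 * z.1 * (e.1 * dot s z + s.1 * dot e z) / nrmsq z ^ 3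
    + 16 * dot e z * dot s z / nrmsq z ^ 3 - 96 * z.1 ^ 2 * dot e z * dot s z / nrmsq z ^ 4

variable {q : ℝ × ℝ}

theorem hasDerivAt_stokesletComponent (hq : q ≠ 0) :
    HasDerivAt (fun t => stokesletComponent c e s (t, q.2)) (stokesletComponentDx c e s q) q.1 := by
  have hρ := hasDerivAt_nrmsq_mk_fst q
  have h0 := nrmsq_ne_zero hq
  have H := ((hρ.log h0).const_mul c).add
    (((hasDerivAt_dot_mk_fst e q).mul (hasDerivAt_dot_mk_fst s q)).div hρ h0)
  refine H.congr_deriv ?_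
  simp only [stokesletComponentDx, dot, nrmsq, Pi.mul_apply] at h0 ⊢
  field_simp
  ring

theorem hasDerivAt_stokesletComponentDx (hq : q ≠ 0) :
    HasDerivAt (fun t => stokesletComponentDx c e s (t, q.2)) (stokesletComponentDxx c e s q)
      q.1 := by
  have hρ := hasDerivAt_nrmsq_mk_fst q
  have hD := hasDerivAt_dot_mk_fst e q
  have hS := hasDerivAt_dot_mk_fst s q
  have h0 := nrmsq_ne_zero hq
  have H := ((((hasDerivAt_id' q.1).const_mul (2 * c)).div hρ h0).add
    (((hS.const_mul e.1).add (hD.const_mul s.1)).div hρ h0)).sub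
    ((((hasDerivAt_id' q.1).const_mul 2).mul hD).mul hS |>.div (hρ.pow 2) (pow_ne_zero 2 h0))
  refine H.congr_deriv ?_
  simp only [stokesletComponentDxx, dot, nrmsq, Pi.add_apply, Pi.mul_apply, Pi.pow_apply] at h0 ⊢
  field_simp
  ring

theorem hasDerivAt_lapStokesletComponent (hq : q ≠ 0) :
    HasDerivAt (fun t => lapStokesletComponent e s (t, q.2)) (lapStokesletComponentDx e s q)
      q.1 := by
  have hρ := hasDerivAt_nrmsq_mk_fst q
  have h0 := nrmsq_ne_zero hq
  have H := ((hasDerivAt_const q.1 (2 * dot e s)).div hρ h0).sub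
    ((((hasDerivAt_dot_mk_fst e q).const_mul 4).mul (hasDerivAt_dot_mk_fst s q)).div
      (hρ.pow 2) (pow_ne_zero 2 h0))
  refine H.congr_deriv ?_
  simp only [lapStokesletComponentDx, dot, nrmsq, Pi.mul_apply, Pi.pow_apply] at h0 ⊢
  field_simp
  ring

theorem hasDerivAt_lapStokesletComponentDx (hq : q ≠ 0) :
    HasDerivAt (fun t => lapStokesletComponentDx e s (t, q.2))
      (lapStokesletComponentDxx e s q) q.1 := by
  have hρ := hasDerivAt_nrmsq_mk_fst q
  have hD := hasDerivAt_dot_mk_fst e q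
  have hS := hasDerivAt_dot_mk_fst s q
  have h0 := nrmsq_ne_zero hq
  have H := ((((hasDerivAt_id' q.1).const_mul (-4 * dot e s)).div (hρ.pow 2)
    (pow_ne_zero 2 h0)).sub ((((hS.const_mul e.1).add (hD.const_mul s.1)).const_mul 4).div
      (hρ.pow 2) (pow_ne_zero 2 h0))).add
    ((((hasDerivAt_id' q.1).const_mul 16).mul hD).mul hS |>.div (hρ.pow 3) (pow_ne_zero 3 h0))
  refine H.congr_deriv ?_
  simp only [lapStokesletComponentDxx, dot, nrmsq, Pi.add_apply, Pi.mul_apply, Pi.pow_apply] at h0 ⊢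
  field_simp
  ring

theorem stokesletComponent_comp_swap :
    stokesletComponent c e s ∘ Prod.swap = stokesletComponent c e.swap s.swap := by
  funext z
  simp only [Function.comp_apply, stokesletComponent, nrmsq_swap, dot_swap_right]

theorem lapStokesletComponent_comp_swap :
    lapStokesletComponent e s ∘ Prod.swap = lapStokesletComponent e.swap s.swap := by
  funext z
  simp only [Function.comp_apply, lapStokesletComponent, nrmsq_swap, dot_swap_right,
    Prod.swap_swap]

theorem stokesletComponentDxx_add_swap (hq : q ≠ 0) :
    stokesletComponentDxx c e s q + stokesletComponentDxx c e.swap s.swap q.swap =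
      lapStokesletComponent e s q := by
  have h0 := nrmsq_ne_zero hq
  simp only [stokesletComponentDxx, lapStokesletComponent, nrmsq_swap]
  simp only [dot, nrmsq, Prod.fst_swap, Prod.snd_swap] at h0 ⊢
  field_simp
  ring

theorem lapStokesletComponentDxx_add_swap (hq : q ≠ 0) :
    lapStokesletComponentDxx e s q + lapStokesletComponentDxx e.swap s.swap q.swap = 0 := by
  have h0 := nrmsq_ne_zero hq
  simp only [lapStokesletComponentDxx, nrmsq_swap]
  simp only [dot, nrmsq, Prod.fst_swap, Prod.snd_swap] at h0 ⊢
  field_simp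
  ring

end ClosedForms

section Biharmonic

variable (c : ℝ) (e s : ℝ × ℝ)

theorem pd1_pd1_stokesletComponent :
    EqOn (pd1 (pd1 (stokesletComponent c e s))) (stokesletComponentDxx c e s) {0}ᶜ :=
  pd1_pd1_eqOn_of_hasDerivAt isOpen_compl_singleton
    (fun _ hq => hasDerivAt_stokesletComponent c e s hq)
    (fun _ hq => hasDerivAt_stokesletComponentDx c e s hq)

theorem pd1_pd1_lapStokesletComponent :
    EqOn (pd1 (pd1 (lapStokesletComponent e s))) (lapStokesletComponentDxx e s) {0}ᶜ :=
  pd1_pd1_eqOn_of_hasDerivAt isOpen_compl_singleton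
    (fun _ hq => hasDerivAt_lapStokesletComponent e s hq)
    (fun _ hq => hasDerivAt_lapStokesletComponentDx e s hq)

theorem lap_stokesletComponent :
    EqOn (lap (stokesletComponent c e s)) (lapStokesletComponent e s) {0}ᶜ := by
  intro q hq
  rw [lap_apply_eq_pd1_add_pd1_comp_swap, stokesletComponent_comp_swap,
    pd1_pd1_stokesletComponent c e s hq,
    pd1_pd1_stokesletComponent c e.swap s.swap (Prod.swap_ne_zero hq),
    stokesletComponentDxx_add_swap c e s hq]

theorem lap_lap_stokesletComponent {q : ℝ × ℝ} (hq : q ≠ 0) :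
    lap (lap (stokesletComponent c e s)) q = 0 := by
  rw [(lap_stokesletComponent c e s).lap isOpen_compl_singleton hq,
    lap_apply_eq_pd1_add_pd1_comp_swap, lapStokesletComponent_comp_swap,
    pd1_pd1_lapStokesletComponent e s hq,
    pd1_pd1_lapStokesletComponent e.swap s.swap (Prod.swap_ne_zero hq),
    lapStokesletComponentDxx_add_swap e s hq]

theorem dot_stokeslet (y σ z : ℝ × ℝ) :
    dot e (stokeslet y σ z) = stokesletComponent (-dot e σ / 2) e σ (z - y) := by
  have hlog : Real.log (nrm (z - y)) = Real.log (nrmsq (z - y)) / 2 :=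
    Real.log_sqrt (add_nonneg (sq_nonneg _) (sq_nonneg _))
  simp only [stokeslet, stokesletComponent, hlog, dot, Prod.fst_add, Prod.snd_add,
    Prod.smul_fst, Prod.smul_snd, smul_eq_mul]
  ring

theorem lap_lap_dot_stokeslet (y σ : ℝ × ℝ) {x : ℝ × ℝ} (hx : x ≠ y) :
    lap (lap fun z => dot e (stokeslet y σ z)) x = 0 := by
  rw [show (fun z => dot e (stokeslet y σ z)) = stokesletComponent (-dot e σ / 2) e σ ∘ (· - y)
    from funext (dot_stokeslet e y σ), lap_comp_sub_const, lap_comp_sub_const]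
  exact lap_lap_stokesletComponent _ e σ (sub_ne_zero.mpr hx)

end Biharmonic

theorem stokeslet_biharmonic (y σ : ℝ × ℝ) :
    ∀ x : ℝ × ℝ, x ≠ y →
      lap (lap (fun z => (stokeslet y σ z).1)) x = 0 ∧
      lap (lap (fun z => (stokeslet y σ z).2)) x = 0 := by
  intro x hx
  constructor
  · simpa [dot] using lap_lap_dot_stokeslet (1, 0) y σ hx
  · simpa [dot] using lap_lap_dot_stokeslet (0, 1) y σ hx
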